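/- arXiv:1005.5646 — 2 statements merged into one kernel-verified Lean document; each statement's English description precedes it below -/
import Mathlib

section
/- Lyapunov's disconjugacy criterion: if q(t) ≥ 0 on [a,b] and ∫_a^b q(t) dt ≤ 4/(b-a), then the equation x'' + q(t)x = 0 is disconjugate on [a,b]. -/
/-!
If a solution `x` vanishes at `s < r`, then `x t = -∫ G(t, σ) q(σ) x(σ) dσ` on `[s, r]`, where `G`
is the Dirichlet Green's function of `x'' = 0` on `[s, r]`. Off the midpoint of `[s, r]` one has
`|G(t, σ)| < (r - s) / 4 ≤ (b - a) / 4`, so at a point where `|x|` is maximal on `[s, r]`,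
`max |x| ≤ max |x| · ∫ |G| q < max |x| · (b - a) / 4 · ∫ q ≤ max |x|` unless `max |x| = 0`
(if `q = 0` a.e. on `[s, r]` the middle inequality fails, but then `∫ |G| q = 0`).
So `x = 0` on `[s, r]`; hence `x` and `x'` vanish at the midpoint of `[s, r]`, and uniqueness for the initial value problem
gives `x = 0` on `[a, b]`: on any window of length `δ` with `δ ∫ |q| < 1` around a double zero,
Taylor's formula bounds `max |x|` by `δ ∫ |q| · max |x|`, and finitely many windows cover `[a, b]`.
-/

open Set MeasureTheory intervalIntegral

/-- `x` is a solution of `x'' + p x' + q x = 0` on the set `J`. -/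
def IsSolOn (p q x : ℝ → ℝ) (J : Set ℝ) : Prop :=
  (∀ t ∈ J, HasDerivAt x (deriv x t) t) ∧
  (∀ t ∈ J, HasDerivAt (deriv x) (deriv (deriv x) t) t) ∧
  (∀ t ∈ J, deriv (deriv x) t + p t * deriv x t + q t * x t = 0)

/-- The equation `x'' + p x' + q x = 0` is disconjugate on `J`:
every solution that is not identically zero on `J` has at most one zero in `J`. -/
def DisconjOn (p q : ℝ → ℝ) (J : Set ℝ) : Prop :=
  ∀ x : ℝ → ℝ, IsSolOn p q x J → (∃ t ∈ J, x t ≠ 0) →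
    ∀ s ∈ J, x s = 0 → ∀ r ∈ J, x r = 0 → s = r

theorem integral_mul_lt_of_ae_lt {α : Type*} [MeasurableSpace α] {μ : Measure α}
    {f φ : α → ℝ} {B C : ℝ} (hf : 0 ≤ᵐ[μ] f) (hfi : Integrable f μ)
    (hφf : Integrable (fun a => φ a * f a) μ) (hφ : ∀ᵐ a ∂μ, φ a < B) (hC : 0 < C)
    (hBC : B * ∫ a, f a ∂μ ≤ C) :
    ∫ a, φ a * f a ∂μ < C := by
  rcases (integral_nonneg_of_ae hf).eq_or_lt with hzero | hpos
  · have hf0 : f =ᵐ[μ] 0 := (integral_eq_zero_iff_of_nonneg_ae hf hfi).1 hzero.symm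
    rwa [integral_eq_zero_of_ae (hf0.mono fun a ha => by simp [ha])]
  have hgi : Integrable (fun a => (B - φ a) * f a) μ := by
    simp_rw [sub_mul]
    exact (hfi.const_mul B).sub hφf
  have hgap : 0 < ∫ a, (B - φ a) * f a ∂μ := by
    rw [integral_pos_iff_support_of_nonneg_ae
      (by filter_upwards [hf, hφ] with a h0 h1 using mul_nonneg (sub_pos.2 h1).le h0) hgi]
    rw [integral_pos_iff_support_of_nonneg_ae hf hfi] at hpos
    refine hpos.trans_le (measure_mono_ae ?_)
    filter_upwards [hφ] with a ha hfa
    exact mul_ne_zero (sub_pos.2 ha).ne' hfa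
  have hsplit : ∫ a, φ a * f a ∂μ = B * ∫ a, f a ∂μ - ∫ a, (B - φ a) * f a ∂μ := by
    rw [← MeasureTheory.integral_const_mul, ← integral_sub (hfi.const_mul B) hgi]
    simp only [sub_mul, sub_sub_cancel]
  linarith

theorem taylor_integral_remainder_of_hasDerivAt {x x' x'' : ℝ → ℝ} {s t : ℝ}
    (hx : ∀ u ∈ uIcc s t, HasDerivAt x (x' u) u) (hx' : ∀ u ∈ uIcc s t, HasDerivAt x' (x'' u) u)
    (hx''i : IntervalIntegrable x'' volume s t) :
    x t = x s + x' s * (t - s) + ∫ σ in s..t, (t - σ) * x'' σ := by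
  have hx'i : IntervalIntegrable x' volume s t :=
    ContinuousOn.intervalIntegrable fun u hu => (hx' u hu).continuousAt.continuousWithinAt
  have hparts := integral_mul_deriv_eq_deriv_mul (u := fun σ => t - σ) (u' := fun _ => -1)
    (fun σ _ => by simpa using (hasDerivAt_id σ).const_sub t) hx' intervalIntegrable_const hx''i
  have hftc : ∫ σ in s..t, x' σ = x t - x s := integral_eq_sub_of_hasDerivAt hx hx'i
  simp only [sub_self, zero_mul, neg_one_mul, intervalIntegral.integral_neg, hftc] at hparts
  linarith

noncomputable def dirichletGreen (s r t σ : ℝ) : ℝ := (min t σ - s) * (max t σ - r) / (r - s)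

theorem continuous_dirichletGreen (s r t : ℝ) : Continuous (dirichletGreen s r t) := by
  unfold dirichletGreen; fun_prop

theorem dirichletGreen_eq_sub (s r t σ : ℝ) (hsr : s ≠ r) :
    dirichletGreen s r t σ = max (t - σ) 0 - (t - s) / (r - s) * (r - σ) := by
  have hrs : r - s ≠ 0 := sub_ne_zero.2 hsr.symm
  rcases le_total t σ with h | h
  · rw [dirichletGreen, min_eq_left h, max_eq_right h, max_eq_right (sub_nonpos.2 h)]
    field_simp; ring
  · rw [dirichletGreen, min_eq_right h, max_eq_left h, max_eq_left (sub_nonneg.2 h)]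
    field_simp; ring

theorem abs_dirichletGreen_lt {s r t σ : ℝ} (ht : t ∈ Icc s r) (hσ : σ ∈ Icc s r)
    (hσmid : σ ≠ (s + r) / 2) : |dirichletGreen s r t σ| < (r - s) / 4 := by
  have hsr : 0 < r - s := by
    by_contra! h
    exact hσmid (by linarith [hσ.1, hσ.2])
  have hfactor : |dirichletGreen s r t σ| = (min t σ - s) * (r - max t σ) / (r - s) := by
    rw [dirichletGreen, abs_div, abs_mul, abs_of_nonneg (by simp [ht.1, hσ.1]),
      abs_of_nonpos (by simp [ht.2, hσ.2]), abs_of_pos hsr, neg_sub]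
  have hmid : 2 * σ - s - r ≠ 0 := fun h => hσmid (by linarith)
  rw [hfactor, div_lt_iff₀ hsr]
  calc (min t σ - s) * (r - max t σ) ≤ (σ - s) * (r - σ) :=
        mul_le_mul (sub_le_sub_right (min_le_right t σ) s) (sub_le_sub_left (le_max_right t σ) r)
          (sub_nonneg.2 (max_le ht.2 hσ.2)) (by linarith [hσ.1])
    _ < (r - s) / 4 * (r - s) := by nlinarith [sq_pos_of_ne_zero hmid]

theorem eq_integral_dirichletGreen_mul {x x' x'' : ℝ → ℝ} {s r t : ℝ} (ht : t ∈ Icc s r)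
    (hx : ∀ u ∈ Icc s r, HasDerivAt x (x' u) u) (hx' : ∀ u ∈ Icc s r, HasDerivAt x' (x'' u) u)
    (hx''i : IntervalIntegrable x'' volume s r) (hxs : x s = 0) (hxr : x r = 0) :
    x t = ∫ σ in s..r, dirichletGreen s r t σ * x'' σ := by
  rcases eq_or_ne s r with rfl | hsr
  · simp [le_antisymm ht.2 ht.1, hxs]
  have hsr' : s ≤ r := ht.1.trans ht.2
  have hsub_r : uIcc s r ⊆ Icc s r := (uIcc_of_le hsr').subset
  have hsub_t : uIcc s t ⊆ Icc s r := uIcc_subset_Icc (left_mem_Icc.2 hsr') ht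
  have htaylor_r := taylor_integral_remainder_of_hasDerivAt (x'' := x'')
    (fun u hu => hx u (hsub_r hu)) (fun u hu => hx' u (hsub_r hu)) hx''i
  have htaylor_t := taylor_integral_remainder_of_hasDerivAt (t := t) (x'' := x'')
    (fun u hu => hx u (hsub_t hu)) (fun u hu => hx' u (hsub_t hu))
    (hx''i.mono_set (uIcc_subset_uIcc_left (Icc_subset_uIcc ht)))
  have hint : ∀ {u v : ℝ} {g : ℝ → ℝ}, u ∈ uIcc s r → v ∈ uIcc s r → Continuous g →
      IntervalIntegrable (fun σ => g σ * x'' σ) volume u v := fun hu hv hg =>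
    (hx''i.mono_set (uIcc_subset_uIcc hu hv)).continuousOn_mul hg.continuousOn
  have hs : s ∈ uIcc s r := left_mem_uIcc
  have hr : r ∈ uIcc s r := right_mem_uIcc
  have ht' : t ∈ uIcc s r := Icc_subset_uIcc ht
  have hleft : ∫ σ in s..t, max (t - σ) 0 * x'' σ = ∫ σ in s..t, (t - σ) * x'' σ := by
    refine integral_congr fun σ hσ => ?_
    rw [uIcc_of_le ht.1] at hσ
    simp only [max_eq_left (sub_nonneg.2 hσ.2)]
  have hright : ∫ σ in t..r, max (t - σ) 0 * x'' σ = 0 := by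
    refine (integral_congr (g := fun _ => 0) fun σ hσ => ?_).trans integral_zero
    rw [uIcc_of_le ht.2] at hσ
    simp only [max_eq_right (sub_nonpos.2 hσ.1), zero_mul]
  have hsplit : ∫ σ in s..r, dirichletGreen s r t σ * x'' σ
      = (∫ σ in s..r, max (t - σ) 0 * x'' σ)
        - (t - s) / (r - s) * ∫ σ in s..r, (r - σ) * x'' σ := by
    rw [← intervalIntegral.integral_const_mul, ← integral_sub (hint hs hr (by fun_prop))
      ((hint hs hr (by fun_prop)).const_mul _)]
    refine integral_congr fun σ _ => ?_
    simp only [dirichletGreen_eq_sub s r t σ hsr]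
    ring
  have hcancel : (t - s) / (r - s) * (r - s) = t - s :=
    div_mul_cancel₀ _ (sub_ne_zero.2 hsr.symm)
  have hmax : Continuous fun σ => max (t - σ) 0 := by fun_prop
  rw [hsplit, ← integral_add_adjacent_intervals (hint hs ht' hmax) (hint ht' hr hmax), hleft,
    hright]
  rw [hxs, hxr] at *
  linear_combination htaylor_t - (t - s) / (r - s) * htaylor_r - x' s * hcancel

theorem exists_mem_uIcc_abs_sub_le {c t d δ : ℝ} (hd : 0 ≤ d) (hδ : 0 ≤ δ)
    (ht : |t - c| ≤ d + δ) : ∃ u ∈ uIcc c t, |u - c| ≤ d ∧ |t - u| ≤ δ := by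
  refine ⟨max (c - d) (min (c + d) t), ?_⟩
  rw [abs_le] at ht
  simp only [mem_uIcc, abs_le]
  grind

theorem abs_integral_le_integral_of_mem_Icc {f : ℝ → ℝ} {a b u v : ℝ}
    (hf : ∀ σ ∈ Icc a b, 0 ≤ f σ) (hfi : IntervalIntegrable f volume a b)
    (hu : u ∈ Icc a b) (hv : v ∈ Icc a b) :
    |∫ σ in u..v, f σ| ≤ ∫ σ in a..b, f σ := by
  wlog huv : u ≤ v generalizing u v
  · rw [integral_symm, abs_neg]
    exact this hv hu (le_of_not_ge huv)
  rw [abs_of_nonneg (integral_nonneg huv fun σ hσ => hf σ ⟨hu.1.trans hσ.1, hσ.2.trans hv.2⟩)]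
  exact integral_mono_interval hu.1 huv hv.2
    (ae_restrict_of_forall_mem measurableSet_Ioc fun σ hσ => hf σ (Ioc_subset_Icc_self hσ)) hfi

namespace IsSolOn

variable {a b : ℝ} {q x : ℝ → ℝ}

theorem hasDerivAt_deriv {J : Set ℝ} (hx : IsSolOn (fun _ => 0) q x J) {t : ℝ} (ht : t ∈ J) :
    HasDerivAt (deriv x) (-(q t * x t)) t := by
  have h := hx.2.2 t ht
  rw [zero_mul, add_zero] at h
  rw [← eq_neg_of_add_eq_zero_left h]
  exact hx.2.1 t ht

theorem continuousOn {p : ℝ → ℝ} {J : Set ℝ} (hx : IsSolOn p q x J) : ContinuousOn x J :=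
  fun t ht => (hx.1 t ht).continuousAt.continuousWithinAt

theorem intervalIntegrable_mul {p : ℝ → ℝ} (hx : IsSolOn p q x (Icc a b))
    (hq : IntervalIntegrable q volume a b) {u v : ℝ} (hu : u ∈ Icc a b) (hv : v ∈ Icc a b) :
    IntervalIntegrable (fun σ => q σ * x σ) volume u v :=
  (hq.mono_set (uIcc_subset_uIcc (Icc_subset_uIcc hu) (Icc_subset_uIcc hv))).mul_continuousOn
    (hx.continuousOn.mono (uIcc_subset_Icc hu hv))

theorem abs_le_of_deriv_eq_zero (hx : IsSolOn (fun _ => 0) q x (Icc a b))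
    (hq : IntervalIntegrable q volume a b) {c t M : ℝ} (hc : c ∈ Icc a b) (ht : t ∈ Icc a b)
    (hxc : x c = 0) (hx'c : deriv x c = 0) (hM : ∀ σ ∈ uIcc c t, |x σ| ≤ M) :
    |x t| ≤ M * |t - c| * ∫ σ in a..b, |q σ| := by
  have hsub := uIcc_subset_Icc hc ht
  have htaylor := taylor_integral_remainder_of_hasDerivAt (fun u hu => hx.1 u (hsub hu))
    (fun u hu => hx.hasDerivAt_deriv (hsub hu)) (hx.intervalIntegrable_mul hq hc ht).neg
  rw [hxc, hx'c, zero_mul, zero_add, zero_add] at htaylor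
  have hM0 : 0 ≤ M := (abs_nonneg _).trans (hxc ▸ hM c left_mem_uIcc)
  have hpoint : ∀ σ ∈ uIcc c t, ‖(t - σ) * -(q σ * x σ)‖ ≤ |q σ| * (M * |t - c|) := by
    intro σ hσ
    rw [Real.norm_eq_abs, abs_mul, abs_neg, abs_mul]
    have h1 := abs_sub_right_of_mem_uIcc hσ
    have h2 := hM σ hσ
    calc |t - σ| * (|q σ| * |x σ|) ≤ |t - c| * (|q σ| * M) := by gcongr
      _ = |q σ| * (M * |t - c|) := by ring
  have hqi : IntervalIntegrable (fun σ => |q σ|) volume c t :=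
    hq.abs.mono_set (uIcc_subset_uIcc (Icc_subset_uIcc hc) (Icc_subset_uIcc ht))
  calc |x t| ≤ |∫ σ in c..t, |q σ| * (M * |t - c|)| := by
        rw [htaylor]
        exact norm_integral_le_abs_of_norm_le
          (ae_restrict_of_forall_mem measurableSet_uIoc fun σ hσ =>
            hpoint σ (uIoc_subset_uIcc hσ)) (hqi.mul_const _)
    _ = |(∫ σ in c..t, |q σ|)| * (M * |t - c|) := by
        rw [intervalIntegral.integral_mul_const, abs_mul,
          abs_of_nonneg (mul_nonneg hM0 (abs_nonneg (t - c)))]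
    _ ≤ (∫ σ in a..b, |q σ|) * (M * |t - c|) := by
        gcongr
        exact abs_integral_le_integral_of_mem_Icc (fun σ _ => abs_nonneg (q σ)) hq.abs hc ht
    _ = M * |t - c| * ∫ σ in a..b, |q σ| := mul_comm _ _

theorem eq_zero_of_abs_sub_le (hx : IsSolOn (fun _ => 0) q x (Icc a b))
    (hq : IntervalIntegrable q volume a b) {c t δ : ℝ} (hδ : δ * ∫ σ in a..b, |q σ| < 1)
    (hc : c ∈ Icc a b) (hxc : x c = 0) (hx'c : deriv x c = 0) (ht : t ∈ Icc a b)
    (htc : |t - c| ≤ δ) : x t = 0 := by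
  have hδ0 : 0 ≤ δ := (abs_nonneg _).trans htc
  have hI : 0 ≤ ∫ σ in a..b, |q σ| := integral_nonneg (hc.1.trans hc.2) fun _ _ => abs_nonneg _
  set J := Icc (max a (c - δ)) (min b (c + δ))
  have hJ : J ⊆ Icc a b := Icc_subset_Icc (le_max_left _ _) (min_le_left _ _)
  have hcJ : c ∈ J := ⟨max_le hc.1 (by linarith), le_min hc.2 (by linarith)⟩
  have htJ : t ∈ J := by
    rw [abs_le] at htc
    exact ⟨max_le ht.1 (by linarith), le_min ht.2 (by linarith)⟩
  obtain ⟨m, hmJ, hmax⟩ :=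
    isCompact_Icc.exists_isMaxOn ⟨c, hcJ⟩ (hx.continuousOn.mono hJ).abs
  have hbound : ∀ σ ∈ J, |x σ| ≤ |x m| * δ * ∫ σ in a..b, |q σ| := fun σ hσ => by
    refine (hx.abs_le_of_deriv_eq_zero hq hc (hJ hσ) hxc hx'c
      fun τ hτ => hmax (ordConnected_Icc.uIcc_subset hcJ hσ hτ)).trans ?_
    have hσc : |σ - c| ≤ δ := by
      rw [abs_le]
      constructor <;> linarith [le_max_right a (c - δ), min_le_right b (c + δ), hσ.1, hσ.2]
    gcongr
  have hm0 : |x m| ≤ 0 := by nlinarith [hbound m hmJ, abs_nonneg (x m)]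
  exact abs_nonpos_iff.1 ((hmax htJ).trans hm0)

theorem deriv_eq_zero_of_eqOn_zero (hx : IsSolOn (fun _ => 0) q x (Icc a b))
    (hq : IntervalIntegrable q volume a b) {c t : ℝ} (hc : c ∈ Icc a b) (ht : t ∈ Icc a b)
    (hx'c : deriv x c = 0) (hzero : EqOn x 0 (uIcc c t)) : deriv x t = 0 := by
  have hsub := uIcc_subset_Icc hc ht
  have hftc := integral_eq_sub_of_hasDerivAt (fun σ hσ => hx.hasDerivAt_deriv (hsub hσ))
    (hx.intervalIntegrable_mul hq hc ht).neg
  rw [integral_congr (g := fun _ => 0) (fun σ hσ => by simp [hzero hσ]),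
    intervalIntegral.integral_zero, hx'c] at hftc
  linarith

theorem eqOn_zero_of_deriv_eq_zero (hx : IsSolOn (fun _ => 0) q x (Icc a b))
    (hq : IntervalIntegrable q volume a b) {c : ℝ} (hc : c ∈ Icc a b) (hxc : x c = 0)
    (hx'c : deriv x c = 0) : EqOn x 0 (Icc a b) := by
  set I := ∫ σ in a..b, |q σ|
  have hI : 0 ≤ I := integral_nonneg (hc.1.trans hc.2) fun _ _ => abs_nonneg _
  set δ := 1 / (I + 1)
  have hδ0 : 0 < δ := by positivity
  have hδ : δ * I < 1 := by
    rw [one_div_mul_eq_div, div_lt_one (by linarith)]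
    linarith
  have hwindow : ∀ u ∈ Icc a b, x u = 0 → deriv x u = 0 →
      ∀ t ∈ Icc a b, |t - u| ≤ δ → x t = 0 ∧ deriv x t = 0 := fun u hu hxu hx'u t ht htu =>
    ⟨hx.eq_zero_of_abs_sub_le hq hδ hu hxu hx'u ht htu,
      hx.deriv_eq_zero_of_eqOn_zero hq hu ht hx'u fun σ hσ =>
        hx.eq_zero_of_abs_sub_le hq hδ hu hxu hx'u (uIcc_subset_Icc hu ht hσ)
          ((abs_sub_left_of_mem_uIcc hσ).trans htu)⟩
  have hball : ∀ n : ℕ, ∀ t ∈ Icc a b, |t - c| ≤ n * δ → x t = 0 ∧ deriv x t = 0 := by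
    intro n
    induction n with
    | zero =>
      intro t _ htc
      rw [Nat.cast_zero, zero_mul, abs_nonpos_iff, sub_eq_zero] at htc
      exact htc ▸ ⟨hxc, hx'c⟩
    | succ n ih =>
      intro t ht htc
      obtain ⟨u, hu, huc, htu⟩ :=
        exists_mem_uIcc_abs_sub_le (d := n * δ) (by positivity) hδ0.le
          (by push_cast at htc; linarith)
      have hu' := uIcc_subset_Icc hc ht hu
      obtain ⟨hxu, hx'u⟩ := ih u hu' huc
      exact hwindow u hu' hxu hx'u t ht htu
  intro t ht
  obtain ⟨n, hn⟩ := exists_nat_ge ((b - a) / δ)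
  refine (hball n t ht ?_).1
  rw [div_le_iff₀ hδ0] at hn
  refine le_trans ?_ hn
  rw [abs_le]
  constructor <;> linarith [ht.1, ht.2, hc.1, hc.2]

theorem eqOn_zero_between_zeros (hx : IsSolOn (fun _ => 0) q x (Icc a b))
    (hqint : IntervalIntegrable q volume a b) (hq : ∀ t ∈ Icc a b, 0 ≤ q t)
    (hbound : ∫ t in a..b, q t ≤ 4 / (b - a)) {s r : ℝ} (hs : s ∈ Icc a b) (hr : r ∈ Icc a b)
    (hsr : s ≤ r) (hxs : x s = 0) (hxr : x r = 0) : EqOn x 0 (Icc s r) := by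
  have hsub : Icc s r ⊆ Icc a b := Icc_subset_Icc hs.1 hr.2
  obtain ⟨m, hm, hmax⟩ :=
    isCompact_Icc.exists_isMaxOn (nonempty_Icc.2 hsr) (hx.continuousOn.mono hsub).abs
  suffices hM : |x m| ≤ 0 from fun t ht => abs_nonpos_iff.1 ((hmax ht).trans hM)
  by_contra! hM
  have hgreen := eq_integral_dirichletGreen_mul hm (fun u hu => hx.1 u (hsub hu))
    (fun u hu => hx.hasDerivAt_deriv (hsub hu)) (hx.intervalIntegrable_mul hqint hs hr).neg
    hxs hxr
  have hqsr : IntervalIntegrable q volume s r :=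
    hqint.mono_set (uIcc_subset_uIcc (Icc_subset_uIcc hs) (Icc_subset_uIcc hr))
  have hGq : IntervalIntegrable (fun σ => |dirichletGreen s r m σ| * q σ) volume s r :=
    hqsr.continuousOn_mul (continuous_dirichletGreen s r m).abs.continuousOn
  have hle : |x m| ≤ |x m| * ∫ σ in s..r, |dirichletGreen s r m σ| * q σ := by
    rw [← intervalIntegral.integral_const_mul]
    nth_rw 1 [hgreen, ← Real.norm_eq_abs]
    refine norm_integral_le_of_norm_le hsr (ae_of_all _ fun σ hσ => ?_) (hGq.const_mul _)
    have hσ : σ ∈ Icc s r := Ioc_subset_Icc_self hσ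
    rw [Real.norm_eq_abs, abs_mul, abs_neg, abs_mul, abs_of_nonneg (hq σ (hsub hσ))]
    calc |dirichletGreen s r m σ| * (q σ * |x σ|)
        = (|dirichletGreen s r m σ| * q σ) * |x σ| := by ring
      _ ≤ (|dirichletGreen s r m σ| * q σ) * |x m| :=
        mul_le_mul_of_nonneg_left (hmax hσ) (mul_nonneg (abs_nonneg _) (hq σ (hsub hσ)))
      _ = |x m| * (|dirichletGreen s r m σ| * q σ) := by ring
  have hlt : ∫ σ in s..r, |dirichletGreen s r m σ| * q σ < 1 := by
    rw [integral_of_le hsr]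
    refine integral_mul_lt_of_ae_lt (B := (r - s) / 4)
      (ae_restrict_of_forall_mem measurableSet_Ioc fun σ hσ =>
        hq σ (hsub (Ioc_subset_Icc_self hσ))) hqsr.1 hGq.1 ?_ one_pos ?_
    · filter_upwards [ae_restrict_mem measurableSet_Ioc,
        ae_restrict_of_ae (volume.ae_ne ((s + r) / 2))] with σ hσ hmid
      exact abs_dirichletGreen_lt hm (Ioc_subset_Icc_self hσ) hmid
    · rw [← integral_of_le hsr]
      calc (r - s) / 4 * ∫ σ in s..r, q σ ≤ (r - s) / 4 * (4 / (b - a)) := by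
            gcongr
            exact (le_abs_self _).trans
                (abs_integral_le_integral_of_mem_Icc hq hqint hs hr) |>.trans hbound
        _ = (r - s) / (b - a) := by ring
        _ ≤ 1 := div_le_one_of_le₀ (by linarith [hs.1, hr.2]) (by linarith [hs.1, hr.2])
  nlinarith

end IsSolOn

theorem lyapunov_criterion_general (a b : ℝ) (q : ℝ → ℝ)
    (hqint : IntervalIntegrable q volume a b)
    (hq : ∀ t ∈ Icc a b, 0 ≤ q t)
    (hbound : ∫ t in a..b, q t ≤ 4 / (b - a)) :
    DisconjOn (fun _ => 0) q (Icc a b) := by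
  intro x hx ⟨t₀, ht₀, hxt₀⟩ s hs hxs r hr hxr
  by_contra hne
  wlog hsr : s < r generalizing s r
  · exact this r hr hxr s hs hxs (Ne.symm hne) (lt_of_le_of_ne (not_lt.1 hsr) (Ne.symm hne))
  have hzero := hx.eqOn_zero_between_zeros hqint hq hbound hs hr hsr.le hxs hxr
  have hmid : (s + r) / 2 ∈ Ioo s r := ⟨by linarith, by linarith⟩
  have hmid' : (s + r) / 2 ∈ Icc a b := ⟨by linarith [hs.1, hmid.1], by linarith [hr.2, hmid.2]⟩
  have hx'mid : deriv x ((s + r) / 2) = 0 := by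
    have hlocal : x =ᶠ[nhds ((s + r) / 2)] fun _ => 0 :=
      Filter.eventually_of_mem (Ioo_mem_nhds hmid.1 hmid.2) fun u hu =>
        hzero (Ioo_subset_Icc_self hu)
    exact hlocal.deriv_eq.trans (deriv_const _ _)
  exact hxt₀
    (hx.eqOn_zero_of_deriv_eq_zero hqint hmid' (hzero (Ioo_subset_Icc_self hmid)) hx'mid ht₀)

/-- Lyapunov's disconjugacy criterion. -/
theorem lyapunov_criterion (a b : ℝ) (hab : a < b) (q : ℝ → ℝ)
    (hqint : IntervalIntegrable q volume a b)
    (hq : ∀ t ∈ Icc a b, 0 ≤ q t)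
    (hbound : ∫ t in a..b, q t ≤ 4 / (b - a)) :
    DisconjOn (fun _ => 0) q (Icc a b) :=
  lyapunov_criterion_general a b q hqint hq hbound
end

section
/- Sharpness of the Lyapunov constant: for every ε > 0 there exists a continuous nonnegative function q on [0,1] with ∫_0^1 q(t) dt ≤ 4 + ε such that x'' + q(t)x = 0 has a nontrivial solution with two zeros in [0,1] (i.e., is not disconjugate on [0,1]). -/
/-
Take a tent `t ↦ min t (1 - t)` and round off its corner on `[1/2 - δ, 1/2 + δ]` by a quartic
cap, so that the result `x` is `C²`, concave, and `x ≥ 1/2 - δ` on the cap. With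
`q := -x'' / x` the equation `x'' + q x = 0` holds and `x` vanishes at `0` and `1`. Since `q`
is supported on the cap, `∫₀¹ q ≤ (∫₀¹ -x'') / (1/2 - δ) = (x'(0) - x'(1)) / (1/2 - δ)
= 4 / (1 - 2δ)`, which tends to `4` as `δ → 0`.
-/

open Set MeasureTheory intervalIntegral

theorem hasDerivAt_ite_le {F : Type*} [NormedAddCommGroup F] [NormedSpace ℝ F]
    {f g f' g' : ℝ → F} {c : ℝ} (hf : ∀ t, HasDerivAt f (f' t) t)
    (hg : ∀ t, HasDerivAt g (g' t) t) (hc : f c = g c) (hc' : f' c = g' c) (t : ℝ) :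
    HasDerivAt (fun u => if u ≤ c then f u else g u) (if t ≤ c then f' t else g' t) t := by
  rcases lt_trichotomy t c with htc | rfl | hct
  · have hf_eq : (fun u => if u ≤ c then f u else g u) =ᶠ[nhds t] f := by
      filter_upwards [Iio_mem_nhds htc] with u (hu : u < c)
      simp [hu.le]
    simpa [htc.le] using (hf t).congr_of_eventuallyEq hf_eq
  · have hleft : HasDerivWithinAt (fun u => if u ≤ t then f u else g u) (f' t) (Iic t) t :=
      (hf t).hasDerivWithinAt.congr (fun u hu => by simp [mem_Iic.mp hu]) (by simp)
    have hright : HasDerivWithinAt (fun u => if u ≤ t then f u else g u) (f' t) (Ici t) t := by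
      refine (hc' ▸ hg t).hasDerivWithinAt.congr (fun u hu => ?_) (by simp [hc])
      rcases (mem_Ici.mp hu).eq_or_lt with rfl | htu
      · simp [hc]
      · simp [not_le.mpr htu]
    have hboth := hleft.union hright
    rw [Iic_union_Ici, hasDerivWithinAt_univ] at hboth
    simpa using hboth
  · have hg_eq : (fun u => if u ≤ c then f u else g u) =ᶠ[nhds t] g := by
      filter_upwards [Ioi_mem_nhds hct] with u (hu : c < u)
      simp [not_le.mpr hu]
    simpa [not_le.mpr hct] using (hg t).congr_of_eventuallyEq hg_eq

theorem IsSolOn.of_hasDerivAt {p q x x' x'' : ℝ → ℝ} {J : Set ℝ}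
    (hx : ∀ t, HasDerivAt x (x' t) t) (hx' : ∀ t, HasDerivAt x' (x'' t) t)
    (heq : ∀ t ∈ J, x'' t + p t * x' t + q t * x t = 0) : IsSolOn p q x J := by
  have hdx : deriv x = x' := funext fun t => (hx t).deriv
  have hdx' : deriv x' = x'' := funext fun t => (hx' t).deriv
  refine ⟨fun t _ => ?_, fun t _ => ?_, fun t ht => ?_⟩ <;> simp only [hdx, hdx']
  exacts [hx t, hx' t, heq t ht]

noncomputable section

variable (δ : ℝ)

/-- At `s = ±δ` its value, slope and curvature are `1/2 - δ`, `∓1` and `0`, those of the tent,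
so the glued function is `C²`. -/
def cap (s : ℝ) : ℝ := 1/2 - 3*δ/8 - 3/(4*δ) * s^2 + s^4/(8*δ^3)

def capDeriv (s : ℝ) : ℝ := -(3/(2*δ)) * s + s^3/(2*δ^3)

def bump (s : ℝ) : ℝ := 3/(2*δ^3) * max (δ^2 - s^2) 0

def smoothTent (t : ℝ) : ℝ :=
  if t ≤ 1/2 - δ then t else if t ≤ 1/2 + δ then cap δ (t - 1/2) else 1 - t

def smoothTentDeriv (t : ℝ) : ℝ :=
  if t ≤ 1/2 - δ then 1 else if t ≤ 1/2 + δ then capDeriv δ (t - 1/2) else -1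

def tentPotential (t : ℝ) : ℝ := bump δ (t - 1/2) / cap δ (t - 1/2)

variable {δ}

theorem hasDerivAt_cap (s : ℝ) : HasDerivAt (cap δ) (capDeriv δ s) s := by
  have h := (((hasDerivAt_pow 2 s).const_mul (3/(4*δ))).const_sub (1/2 - 3*δ/8)).add
    ((hasDerivAt_pow 4 s).div_const (8*δ^3))
  exact h.congr_deriv (by unfold capDeriv; push_cast; ring)

theorem hasDerivAt_capDeriv (s : ℝ) :
    HasDerivAt (capDeriv δ) (3/(2*δ^3) * (s^2 - δ^2)) s := by
  have h := ((hasDerivAt_id s).const_mul (-(3/(2*δ)))).add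
    ((hasDerivAt_pow 3 s).div_const (2*δ^3))
  exact h.congr_deriv (by push_cast; field_simp; ring)

theorem cap_of_sq_eq {s : ℝ} (hs : s^2 = δ^2) : cap δ s = 1/2 - δ := by
  have hs4 : s^4 = δ^4 := by rw [show s^4 = (s^2)^2 by ring, hs]; ring
  unfold cap; rw [hs, hs4]; field_simp; ring

theorem capDeriv_neg_self (hδ : δ ≠ 0) : capDeriv δ (-δ) = 1 := by
  unfold capDeriv; field_simp; ring

theorem capDeriv_self (hδ : δ ≠ 0) : capDeriv δ δ = -1 := by
  unfold capDeriv; field_simp; ring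

theorem sub_le_cap (hδ : 0 < δ) {s : ℝ} (hs : s^2 ≤ δ^2) : 1/2 - δ ≤ cap δ s := by
  have key : cap δ s - (1/2 - δ) = (δ^2 - s^2) * (5*δ^2 - s^2) / (8*δ^3) := by
    unfold cap; field_simp; ring
  have : 0 ≤ (δ^2 - s^2) * (5*δ^2 - s^2) / (8*δ^3) := by
    apply div_nonneg _ (by positivity)
    exact mul_nonneg (by linarith) (by nlinarith)
  linarith

theorem cap_pos (hδ : 0 < δ) (hδ' : δ < 1/3) (s : ℝ) : 0 < cap δ s := by
  have key : cap δ s = ((s^2 - 3*δ^2)^2 + 4*δ^3*(1 - 3*δ)) / (8*δ^3) := by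
    unfold cap; field_simp; ring
  have : 0 < 4*δ^3*(1 - 3*δ) := mul_pos (by positivity) (by linarith)
  rw [key]; positivity

theorem bump_nonneg (hδ : 0 ≤ δ) (s : ℝ) : 0 ≤ bump δ s := by
  unfold bump; positivity

theorem bump_eq_zero {s : ℝ} (hs : δ^2 ≤ s^2) : bump δ s = 0 := by
  simp [bump, hs]

theorem bump_eq {s : ℝ} (hs : s^2 ≤ δ^2) : bump δ s = 3/(2*δ^3) * (δ^2 - s^2) := by
  simp [bump, hs]

theorem continuous_bump : Continuous (bump δ) := by
  unfold bump; fun_prop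

theorem hasDerivAt_smoothTent (hδ : 0 < δ) (t : ℝ) :
    HasDerivAt (smoothTent δ) (smoothTentDeriv δ t) t := by
  have hcap : ∀ u, HasDerivAt (fun v => if v ≤ 1/2 + δ then cap δ (v - 1/2) else 1 - v)
      (if u ≤ 1/2 + δ then capDeriv δ (u - 1/2) else -1) u :=
    hasDerivAt_ite_le (fun v => (hasDerivAt_cap (v - 1/2)).comp_sub_const v (1/2))
      (fun v => (hasDerivAt_id v).const_sub 1)
      (by rw [add_sub_cancel_left, cap_of_sq_eq rfl]; ring)
      (by rw [add_sub_cancel_left, capDeriv_self hδ.ne'])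
  exact hasDerivAt_ite_le (fun v => hasDerivAt_id v) hcap
    (by rw [if_pos (by linarith), sub_sub_cancel_left, cap_of_sq_eq (neg_sq δ)]; rfl)
    (by rw [if_pos (by linarith), sub_sub_cancel_left, capDeriv_neg_self hδ.ne']) t

theorem hasDerivAt_smoothTentDeriv (hδ : 0 < δ) (t : ℝ) :
    HasDerivAt (smoothTentDeriv δ) (-bump δ (t - 1/2)) t := by
  have hcap : ∀ u, HasDerivAt (fun v => if v ≤ 1/2 + δ then capDeriv δ (v - 1/2) else -1)
      (if u ≤ 1/2 + δ then 3/(2*δ^3) * ((u - 1/2)^2 - δ^2) else 0) u :=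
    hasDerivAt_ite_le (fun v => (hasDerivAt_capDeriv (v - 1/2)).comp_sub_const v (1/2))
      (fun v => hasDerivAt_const v (-1))
      (by rw [add_sub_cancel_left, capDeriv_self hδ.ne'])
      (by rw [add_sub_cancel_left]; ring)
  have h := hasDerivAt_ite_le (c := 1/2 - δ) (fun v => hasDerivAt_const v (1 : ℝ)) hcap
    (by rw [if_pos (by linarith), sub_sub_cancel_left, capDeriv_neg_self hδ.ne'])
    (by rw [if_pos (by linarith), sub_sub_cancel_left]; ring) t
  refine h.congr_deriv ?_
  split_ifs with hl hr
  · rw [bump_eq_zero (by nlinarith)]; simp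
  · rw [bump_eq (by nlinarith)]; ring
  · rw [bump_eq_zero (by nlinarith)]; simp

theorem isSolOn_smoothTent (hδ : 0 < δ) (hδ' : δ < 1/3) (J : Set ℝ) :
    IsSolOn (fun _ => 0) (tentPotential δ) (smoothTent δ) J := by
  refine .of_hasDerivAt (hasDerivAt_smoothTent hδ) (hasDerivAt_smoothTentDeriv hδ) fun t _ => ?_
  have hcap := (cap_pos hδ hδ' (t - 1/2)).ne'
  unfold tentPotential smoothTent
  split_ifs with hl hr
  · rw [bump_eq_zero (by nlinarith)]; simp
  · rw [zero_mul, add_zero, div_mul_cancel₀ _ hcap, neg_add_cancel]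
  · rw [bump_eq_zero (by nlinarith)]; simp

theorem continuous_tentPotential (hδ : 0 < δ) (hδ' : δ < 1/3) :
    Continuous (tentPotential δ) :=
  (continuous_bump.comp (continuous_sub_right _)).div (by unfold cap; fun_prop)
    fun t => (cap_pos hδ hδ' _).ne'

theorem tentPotential_nonneg (hδ : 0 < δ) (hδ' : δ < 1/3) (t : ℝ) : 0 ≤ tentPotential δ t :=
  div_nonneg (bump_nonneg hδ.le _) (cap_pos hδ hδ' _).le

theorem tentPotential_le (hδ : 0 < δ) (hδ' : δ < 1/2) (t : ℝ) :
    tentPotential δ t ≤ bump δ (t - 1/2) / (1/2 - δ) := by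
  rcases le_total ((t - 1/2)^2) (δ^2) with hs | hs
  · exact div_le_div_of_nonneg_left (bump_nonneg hδ.le _) (by linarith) (sub_le_cap hδ hs)
  · rw [tentPotential, bump_eq_zero hs, zero_div, zero_div]

theorem integral_bump_comp_sub_half (hδ : 0 < δ) (hδ' : δ < 1/2) :
    ∫ t in (0:ℝ)..1, bump δ (t - 1/2) = 2 := by
  have hFTC := integral_eq_sub_of_hasDerivAt (fun t _ => hasDerivAt_smoothTentDeriv hδ t)
    ((continuous_bump.comp (continuous_sub_right _)).neg.intervalIntegrable 0 1)
  have h0 : smoothTentDeriv δ 0 = 1 := if_pos (by linarith)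
  have h1 : smoothTentDeriv δ 1 = -1 := by
    rw [smoothTentDeriv, if_neg (by linarith), if_neg (by linarith)]
  rw [intervalIntegral.integral_neg, h0, h1] at hFTC
  linarith

theorem integral_tentPotential_le (hδ : 0 < δ) (hδ' : δ < 1/3) :
    ∫ t in (0:ℝ)..1, tentPotential δ t ≤ 4 / (1 - 2*δ) :=
  calc ∫ t in (0:ℝ)..1, tentPotential δ t
      ≤ ∫ t in (0:ℝ)..1, bump δ (t - 1/2) / (1/2 - δ) :=
        integral_mono_on zero_le_one ((continuous_tentPotential hδ hδ').intervalIntegrable _ _)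
          (((continuous_bump.comp (continuous_sub_right _)).div_const _).intervalIntegrable _ _)
          fun t _ => tentPotential_le hδ (by linarith) t
    _ = 4 / (1 - 2*δ) := by
        rw [intervalIntegral.integral_div, integral_bump_comp_sub_half hδ (by linarith)]
        field_simp
        ring

end

/-- sharpness of the constant `4` in Lyapunov's criterion. -/
theorem lyapunov_constant_sharp :
    ∀ ε > (0 : ℝ), ∃ q : ℝ → ℝ,
      ContinuousOn q (Icc 0 1) ∧
      (∀ t ∈ Icc (0 : ℝ) 1, 0 ≤ q t) ∧
      (∫ t in (0 : ℝ)..1, q t) ≤ 4 + ε ∧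
      ∃ x : ℝ → ℝ, IsSolOn (fun _ => 0) q x (Icc 0 1) ∧
        (∃ t ∈ Icc (0 : ℝ) 1, x t ≠ 0) ∧
        ∃ s ∈ Icc (0 : ℝ) 1, ∃ r ∈ Icc (0 : ℝ) 1, s ≠ r ∧ x s = 0 ∧ x r = 0 := by
  intro ε hε
  -- chosen so that `4 / (1 - 2δ) = 8 (4 + ε) / (8 + ε)`
  set δ := ε / (4 * (4 + ε)) with hδ_def
  have hδ : 0 < δ := by positivity
  have hδ' : δ < 1/3 := by rw [div_lt_iff₀ (by positivity)]; linarith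
  have hbound : 4 / (1 - 2*δ) ≤ 4 + ε := by
    rw [div_le_iff₀ (by linarith), hδ_def]
    field_simp
    nlinarith
  have hmid : smoothTent δ (1/2) = cap δ 0 := by
    rw [smoothTent, if_neg (by linarith), if_pos (by linarith), sub_self]
  have hzero : smoothTent δ 0 = 0 := if_pos (by linarith)
  have hone : smoothTent δ 1 = 0 := by
    rw [smoothTent, if_neg (by linarith), if_neg (by linarith), sub_self]
  exact ⟨tentPotential δ, (continuous_tentPotential hδ hδ').continuousOn,
    fun t _ => tentPotential_nonneg hδ hδ' t,
    (integral_tentPotential_le hδ hδ').trans hbound,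
    smoothTent δ, isSolOn_smoothTent hδ hδ' _,
    ⟨1/2, by norm_num, hmid ▸ (cap_pos hδ hδ' 0).ne'⟩,
    0, by norm_num, 1, by norm_num, zero_ne_one, hzero, hone⟩
end
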